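/- (Second-layer invertibility.) Let g ∈ L¹(ℝ²) with Fourier transform 𝓕g(ω) = G(‖ω‖), where G : [0,∞) → [0,∞) is antitone. Let Ξ ⊂ ℝ² be a finite set of central frequencies, J ∈ ℕ, and define ψ_{j,ζ}(u) = 2^{−2j} g(2^{−j}u) sin(⟨ζ, 2^{−j}u⟩) for 0 ≤ j < J, ζ ∈ Ξ. Let φ, h ∈ L¹(ℝ²) and assume for every ω ∈ ℝ²: |𝓕φ(ω)|² + |𝓕h(ω)|² + Σ_{j<J, ζ∈Ξ} |𝓕ψ_{j,ζ}(ω)|² > 0. For x ∈ L¹(ℝ²), γ ∈ {−1,+1}, and ζ ∈ Ξ, set v^{x}_{γ,ζ} = Σ_{j<J} σ(γ · x ∗ ψ_{j,ζ}) ∈ L¹(ℝ²), and define the second-layer outputs as the collection U²x = { v^{x}_{γ,ζ} ∗ φ, v^{x}_{γ,ζ} ∗ h, σ(γ' · v^{x}_{γ,ζ} ∗ ψ_{j',ζ'}) : γ, γ' ∈ {±1}, ζ, ζ' ∈ Ξ, 0 ≤ j' < J }. If x, y ∈ L¹(ℝ²) satisfy x ∗ φ = y ∗ φ, x ∗ h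 = y ∗ h almost everywhere, and every corresponding element of U²x and U²y agrees almost everywhere, then x = y almost everywhere. That is, the map x ↦ { x ∗ φ, x ∗ h, U²x } is invertible. -/

import Mathlib

open MeasureTheory
open scoped RealInnerProductSpace

noncomputable def fourier2 (f : EuclideanSpace ℝ (Fin 2) → ℝ)
    (ω : EuclideanSpace ℝ (Fin 2)) : ℂ :=
  ∫ u : EuclideanSpace ℝ (Fin 2), (f u : ℂ) * Complex.exp (-Complex.I * (⟪u, ω⟫ : ℂ))

noncomputable def conv2 (f g : EuclideanSpace ℝ (Fin 2) → ℝ)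
    (u : EuclideanSpace ℝ (Fin 2)) : ℝ :=
  ∫ t : EuclideanSpace ℝ (Fin 2), f (u - t) * g t

/-!
Under `fourier2` convolution becomes multiplication, and `fourier2` is injective on `L¹`: if
`𝓕f = 0` then the finite measures `f⁺ du` and `f⁻ du` have the same characteristic function.

Since `σ(t) - σ(-t) = t`, the outputs `σ(±v ∗ ψ_{j',ζ'})` determine `v ∗ ψ_{j',ζ'}`; with `v ∗ φ`,
`v ∗ h` and the frame condition this determines `v^x_{γ,ζ}`. Then
`v^x_{1,ζ} - v^x_{-1,ζ} = Σ_j x ∗ ψ_{j,ζ}`, so `(𝓕x - 𝓕y) · Σ_j 𝓕ψ_{j,ζ} = 0`. Now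
`𝓕ψ_{j,ζ}(ω) = (G ‖2^j ω - ζ‖ - G ‖2^j ω + ζ‖) / 2i`, and as `G` is antitone all these terms have
the sign of `⟨ω, ζ⟩`, so their sum vanishes only if each term does. Hence where `𝓕x ≠ 𝓕y` every
filter of the frame would vanish.
-/

section Injectivity

variable {E : Type*} [NormedAddCommGroup E] [InnerProductSpace ℝ E] [MeasurableSpace E]
  [BorelSpace E] {μ : Measure E}

theorem MeasureTheory.Integrable.ofReal_mul_exp_inner {f : E → ℝ} (hf : Integrable f μ) (t : E) :
    Integrable (fun x => (f x : ℂ) * Complex.exp (⟪x, t⟫ * Complex.I)) μ :=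
  hf.ofReal.mul_bdd (by fun_prop : Continuous _).aestronglyMeasurable
    (ae_of_all _ fun x => (Complex.norm_exp_ofReal_mul_I _).le)

theorem ae_eq_zero_of_forall_integral_mul_exp_inner_eq_zero [CompleteSpace E]
    [SecondCountableTopology E] {f : E → ℝ} (hf : Integrable f μ)
    (h : ∀ t, ∫ x, (f x : ℂ) * Complex.exp (⟪x, t⟫ * Complex.I) ∂μ = 0) : f =ᵐ[μ] 0 := by
  have hf' : Integrable (fun x => -f x) μ := hf.neg
  have := isFiniteMeasure_withDensity_ofReal hf.2
  have := isFiniteMeasure_withDensity_ofReal hf'.2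
  have hchar : charFun (μ.withDensity fun x => ENNReal.ofReal (f x))
      = charFun (μ.withDensity fun x => ENNReal.ofReal (-f x)) := by
    ext t
    rw [charFun_apply, charFun_apply,
      integral_withDensity_eq_integral_toReal_smul₀ hf.aemeasurable.ennreal_ofReal (by simp),
      integral_withDensity_eq_integral_toReal_smul₀ hf'.aemeasurable.ennreal_ofReal (by simp),
      ← sub_eq_zero, ← integral_sub, ← h t]
    · congr 1 with x
      simp only [ENNReal.toReal_ofReal', Complex.real_smul, ← sub_mul, ← Complex.ofReal_sub,
        max_zero_sub_max_neg_zero_eq_self]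
    · simpa [Complex.real_smul, ENNReal.toReal_ofReal'] using hf.pos_part.ofReal_mul_exp_inner t
    · simpa [Complex.real_smul, ENNReal.toReal_ofReal'] using hf.neg_part.ofReal_mul_exp_inner t
  have hμ := (withDensity_eq_iff hf.aemeasurable.ennreal_ofReal hf'.aemeasurable.ennreal_ofReal
    hf.lintegral_lt_top.ne).1 (Measure.ext_of_charFun hchar)
  filter_upwards [hμ] with x hx
  have hpos : ENNReal.ofReal (f x) = 0 := by
    rcases le_total (f x) 0 with h | h
    · exact ENNReal.ofReal_of_nonpos h
    · exact hx.trans (ENNReal.ofReal_of_nonpos (neg_nonpos.2 h))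
  have hneg : ENNReal.ofReal (-f x) = 0 := hx ▸ hpos
  rw [ENNReal.ofReal_eq_zero] at hpos hneg
  exact le_antisymm hpos (neg_nonpos.1 hneg)

end Injectivity

section Antitone

variable {E : Type*} [NormedAddCommGroup E] [InnerProductSpace ℝ E]

theorem norm_sub_le_norm_add_of_inner_nonneg {a b : E} (h : 0 ≤ ⟪a, b⟫) :
    ‖a - b‖ ≤ ‖a + b‖ := by
  rw [← sq_le_sq₀ (norm_nonneg _) (norm_nonneg _), norm_sub_sq_real, norm_add_sq_real]
  linarith

theorem AntitoneOn.apply_norm_add_le_apply_norm_sub {G : ℝ → ℝ} (hG : AntitoneOn G (Set.Ici 0))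
    {a b : E} (h : 0 ≤ ⟪a, b⟫) : G ‖a + b‖ ≤ G ‖a - b‖ :=
  hG (norm_nonneg _) (norm_nonneg _) (norm_sub_le_norm_add_of_inner_nonneg h)

theorem AntitoneOn.forall_sub_eq_zero_of_sum_eq_zero {G : ℝ → ℝ}
    (hG : AntitoneOn G (Set.Ici 0)) {ι : Type*} {s : Finset ι} {r : ι → ℝ}
    (hr : ∀ i ∈ s, 0 ≤ r i) {ω ζ : E}
    (h : ∑ i ∈ s, (G ‖r i • ω - ζ‖ - G ‖r i • ω + ζ‖) = 0) :
    ∀ i ∈ s, G ‖r i • ω - ζ‖ - G ‖r i • ω + ζ‖ = 0 := by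
  rcases le_total 0 ⟪ω, ζ⟫ with hωζ | hωζ
  · refine (Finset.sum_eq_zero_iff_of_nonneg fun i hi => sub_nonneg.2 ?_).1 h
    refine hG.apply_norm_add_le_apply_norm_sub ?_
    rw [real_inner_smul_left]
    exact mul_nonneg (hr i hi) hωζ
  · refine (Finset.sum_eq_zero_iff_of_nonpos fun i hi => sub_nonpos.2 ?_).1 h
    have := hG.apply_norm_add_le_apply_norm_sub (a := r i • ω) (b := -ζ) <| by
      rw [inner_neg_right, real_inner_smul_left]
      exact neg_nonneg.2 (mul_nonpos_of_nonneg_of_nonpos (hr i hi) hωζ)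
    rwa [sub_neg_eq_add, ← sub_eq_add_neg] at this

end Antitone

theorem eq_of_mul_eq_mul_of_frame {K : Type*} [NormedField K] {ι κ : Type*} {s : Finset ι}
    {t : Finset κ} {A B p q : K} {c : ι → κ → K}
    (hframe : 0 < ‖p‖ ^ 2 + ‖q‖ ^ 2 + ∑ i ∈ s, ∑ k ∈ t, ‖c i k‖ ^ 2)
    (hp : A * p = B * p) (hq : A * q = B * q) (hc : ∀ i ∈ s, ∀ k ∈ t, A * c i k = B * c i k) :
    A = B := by
  by_contra hAB
  have hzero : ∀ z : K, A * z = B * z → ‖z‖ ^ 2 = 0 := fun z hz => by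
    simp [(mul_eq_mul_right_iff.1 hz).resolve_left hAB]
  rw [hzero p hp, hzero q hq,
    Finset.sum_eq_zero fun i hi => Finset.sum_eq_zero fun k hk => hzero _ (hc i hi k hk)] at hframe
  simp at hframe

theorem max_zero_one_mul_sub_max_zero_neg_one_mul (s : ℝ) :
    max 0 (1 * s) - max 0 (-1 * s) = s := by
  rw [one_mul, neg_one_mul, max_comm, max_comm 0, max_zero_sub_max_neg_zero_eq_self]

theorem sum_max_zero_one_mul_sub_sum_max_zero_neg_one_mul {ι : Type*} (s : Finset ι)
    (a : ι → ℝ) : ∑ i ∈ s, max 0 (1 * a i) - ∑ i ∈ s, max 0 (-1 * a i) = ∑ i ∈ s, a i := by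
  rw [← Finset.sum_sub_distrib]
  simp only [max_zero_one_mul_sub_max_zero_neg_one_mul]

theorem Filter.EventuallyEq.of_max_zero_one_mul {α : Type*} {l : Filter α} {a b : α → ℝ}
    (h₁ : ∀ᶠ u in l, max 0 (1 * a u) = max 0 (1 * b u))
    (h₂ : ∀ᶠ u in l, max 0 (-1 * a u) = max 0 (-1 * b u)) : a =ᶠ[l] b := by
  filter_upwards [h₁, h₂] with u hu₁ hu₂
  rw [← max_zero_one_mul_sub_max_zero_neg_one_mul (a u), hu₁, hu₂,
    max_zero_one_mul_sub_max_zero_neg_one_mul]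

theorem MeasureTheory.Integrable.max_zero_const_mul {α : Type*} [MeasurableSpace α]
    {μ : Measure α} {f : α → ℝ} (hf : Integrable f μ) (γ : ℝ) :
    Integrable (fun u => max 0 (γ * f u)) μ := by
  simpa only [max_comm] using (hf.const_mul γ).pos_part

local notation "ℝ²" => EuclideanSpace ℝ (Fin 2)

open FourierTransform in
theorem fourier2_eq_fourier (f : ℝ² → ℝ) (ω : ℝ²) :
    fourier2 f ω = 𝓕 (fun u => (f u : ℂ)) ((2 * Real.pi)⁻¹ • ω) := by
  rw [Real.fourier_eq, fourier2]
  congr 1 with u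
  rw [Circle.smul_def, Real.fourierChar_apply, real_inner_smul_right, smul_eq_mul]
  push_cast
  field_simp

theorem fourier2_eq_integral_mul_exp_inner (f : ℝ² → ℝ) (ω : ℝ²) :
    fourier2 f ω = ∫ u, (f u : ℂ) * Complex.exp (⟪u, -ω⟫ * Complex.I) := by
  simp only [fourier2, inner_neg_right, Complex.ofReal_neg, neg_mul, mul_comm Complex.I]

theorem integrable_fourier2_integrand {f : ℝ² → ℝ} (hf : Integrable f) (ω : ℝ²) :
    Integrable fun u => (f u : ℂ) * Complex.exp (-Complex.I * (⟪u, ω⟫ : ℂ)) := by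
  simpa only [inner_neg_right, Complex.ofReal_neg, neg_mul, mul_comm Complex.I] using
    hf.ofReal_mul_exp_inner (-ω)

theorem fourier2_congr_ae {f f' : ℝ² → ℝ} (h : f =ᵐ[volume] f') (ω : ℝ²) :
    fourier2 f ω = fourier2 f' ω :=
  integral_congr_ae (h.mono fun u hu => by simp only [hu])

theorem fourier2_sub {f f' : ℝ² → ℝ} (hf : Integrable f) (hf' : Integrable f') (ω : ℝ²) :
    fourier2 (fun u => f u - f' u) ω = fourier2 f ω - fourier2 f' ω := by
  simp only [fourier2_eq_integral_mul_exp_inner, Complex.ofReal_sub, sub_mul]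
  exact integral_sub (hf.ofReal_mul_exp_inner _) (hf'.ofReal_mul_exp_inner _)

theorem fourier2_sum {ι : Type*} (s : Finset ι) {f : ι → ℝ² → ℝ}
    (hf : ∀ i ∈ s, Integrable (f i)) (ω : ℝ²) :
    fourier2 (fun u => ∑ i ∈ s, f i u) ω = ∑ i ∈ s, fourier2 (f i) ω := by
  simp only [fourier2_eq_integral_mul_exp_inner, Complex.ofReal_sum, Finset.sum_mul]
  exact integral_finsetSum s fun i hi => (hf i hi).ofReal_mul_exp_inner _

theorem ae_eq_of_fourier2_eq {f f' : ℝ² → ℝ} (hf : Integrable f) (hf' : Integrable f')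
    (h : ∀ ω, fourier2 f ω = fourier2 f' ω) : f =ᵐ[volume] f' := by
  have hsub := ae_eq_zero_of_forall_integral_mul_exp_inner_eq_zero (f := fun u => f u - f' u)
    (hf.sub hf') fun t => by
      rw [← neg_neg t, ← fourier2_eq_integral_mul_exp_inner, fourier2_sub hf hf', h, sub_self]
  filter_upwards [hsub] with u hu
  exact sub_eq_zero.1 hu

open scoped Convolution

theorem ofReal_conv2 (f g : ℝ² → ℝ) :
    (fun u => (conv2 f g u : ℂ))
      = (fun u => (g u : ℂ)) ⋆[ContinuousLinearMap.mul ℂ ℂ] fun u => (f u : ℂ) := by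
  ext u
  rw [conv2, convolution_def]
  refine integral_ofReal.symm.trans ?_
  congr 1 with t
  simp [mul_comm]

theorem integrable_conv2 {f g : ℝ² → ℝ} (hf : Integrable f) (hg : Integrable g) :
    Integrable (conv2 f g) := by
  have : Integrable fun u => (conv2 f g u : ℂ) := by
    rw [ofReal_conv2]
    exact hg.ofReal.integrable_convolution _ hf.ofReal
  simpa using this.re

theorem fourier2_conv2 {f g : ℝ² → ℝ} (hf : Integrable f) (hg : Integrable g) (ω : ℝ²) :
    fourier2 (conv2 f g) ω = fourier2 f ω * fourier2 g ω := by
  simp only [fourier2_eq_fourier, ofReal_conv2]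
  have := Real.fourier_mul_convolution_eq (R := ℂ) hg.ofReal hf.ofReal ((2 * Real.pi)⁻¹ • ω)
  exact this.trans (mul_comm _ _)

theorem fourier2_sum_conv2 {ι : Type*} (s : Finset ι) {f : ℝ² → ℝ} {k : ι → ℝ² → ℝ}
    (hf : Integrable f) (hk : ∀ i ∈ s, Integrable (k i)) (ω : ℝ²) :
    fourier2 (fun u => ∑ i ∈ s, conv2 f (k i) u) ω = fourier2 f ω * ∑ i ∈ s, fourier2 (k i) ω := by
  rw [fourier2_sum s fun i hi => integrable_conv2 hf (hk i hi), Finset.mul_sum]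
  exact Finset.sum_congr rfl fun i hi => fourier2_conv2 hf (hk i hi) ω

theorem fourier2_mul_eq_of_conv2_ae_eq {a b k : ℝ² → ℝ} (ha : Integrable a) (hb : Integrable b)
    (hk : Integrable k) (h : conv2 a k =ᵐ[volume] conv2 b k) (ω : ℝ²) :
    fourier2 a ω * fourier2 k ω = fourier2 b ω * fourier2 k ω := by
  rw [← fourier2_conv2 ha hk, ← fourier2_conv2 hb hk, fourier2_congr_ae h]

theorem ae_eq_of_conv2_ae_eq_of_frame {ι κ : Type*} {s : Finset ι} {t : Finset κ}
    {φ h : ℝ² → ℝ} {ψ : ι → κ → ℝ² → ℝ}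
    (hframe : ∀ ω, 0 < ‖fourier2 φ ω‖ ^ 2 + ‖fourier2 h ω‖ ^ 2
      + ∑ i ∈ s, ∑ k ∈ t, ‖fourier2 (ψ i k) ω‖ ^ 2)
    (hφ : Integrable φ) (hh : Integrable h) (hψ : ∀ i ∈ s, ∀ k ∈ t, Integrable (ψ i k))
    {a b : ℝ² → ℝ} (ha : Integrable a) (hb : Integrable b)
    (haφ : conv2 a φ =ᵐ[volume] conv2 b φ) (hah : conv2 a h =ᵐ[volume] conv2 b h)
    (haψ : ∀ i ∈ s, ∀ k ∈ t, conv2 a (ψ i k) =ᵐ[volume] conv2 b (ψ i k)) :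
    a =ᵐ[volume] b :=
  ae_eq_of_fourier2_eq ha hb fun ω => eq_of_mul_eq_mul_of_frame (hframe ω)
    (fourier2_mul_eq_of_conv2_ae_eq ha hb hφ haφ ω) (fourier2_mul_eq_of_conv2_ae_eq ha hb hh hah ω)
    fun i hi k hk => fourier2_mul_eq_of_conv2_ae_eq ha hb (hψ i hi k hk) (haψ i hi k hk) ω

theorem integrable_sum_max_zero_mul_conv2 {ι : Type*} (s : Finset ι) {f : ℝ² → ℝ}
    {k : ι → ℝ² → ℝ} (hf : Integrable f) (hk : ∀ i ∈ s, Integrable (k i)) (γ : ℝ) :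
    Integrable fun u => ∑ i ∈ s, max 0 (γ * conv2 f (k i) u) :=
  integrable_finsetSum s fun i hi => (integrable_conv2 hf (hk i hi)).max_zero_const_mul γ

theorem fourier2_mul_sum_eq_of_sum_max_zero_ae_eq {ι : Type*} {s : Finset ι} {a b : ℝ² → ℝ}
    {k : ι → ℝ² → ℝ} (ha : Integrable a) (hb : Integrable b) (hk : ∀ i ∈ s, Integrable (k i))
    (h₁ : ∀ᵐ u, ∑ i ∈ s, max 0 (1 * conv2 a (k i) u) = ∑ i ∈ s, max 0 (1 * conv2 b (k i) u))
    (h₂ : ∀ᵐ u, ∑ i ∈ s, max 0 (-1 * conv2 a (k i) u) = ∑ i ∈ s, max 0 (-1 * conv2 b (k i) u))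
    (ω : ℝ²) :
    fourier2 a ω * ∑ i ∈ s, fourier2 (k i) ω = fourier2 b ω * ∑ i ∈ s, fourier2 (k i) ω := by
  rw [← fourier2_sum_conv2 s ha hk, ← fourier2_sum_conv2 s hb hk]
  refine fourier2_congr_ae ?_ ω
  filter_upwards [h₁, h₂] with u hu₁ hu₂
  rw [← sum_max_zero_one_mul_sub_sum_max_zero_neg_one_mul s fun i => conv2 a (k i) u, hu₁, hu₂,
    sum_max_zero_one_mul_sub_sum_max_zero_neg_one_mul]

noncomputable def dilate (r : ℝ) (f : ℝ² → ℝ) (u : ℝ²) : ℝ := (r ^ 2)⁻¹ * f (r⁻¹ • u)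

theorem integrable_dilate {f : ℝ² → ℝ} (hf : Integrable f) {r : ℝ} (hr : r ≠ 0) :
    Integrable (dilate r f) :=
  (hf.comp_smul (inv_ne_zero hr)).const_mul _

theorem fourier2_dilate (f : ℝ² → ℝ) {r : ℝ} (hr : 0 < r) (ω : ℝ²) :
    fourier2 (dilate r f) ω = fourier2 f (r • ω) := by
  set W : ℝ² → ℂ := fun t => (f t : ℂ) * Complex.exp (-Complex.I * (⟪t, r • ω⟫ : ℂ))
  have hinner : ∀ u : ℝ², ⟪r⁻¹ • u, r • ω⟫ = ⟪u, ω⟫ := fun u => by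
    rw [real_inner_smul_left, real_inner_smul_right, inv_mul_cancel_left₀ hr.ne']
  calc fourier2 (dilate r f) ω = ∫ u, ((r ^ 2)⁻¹ : ℝ) • W (r⁻¹ • u) := by
        simp only [fourier2, dilate, W, hinner, Complex.real_smul]
        push_cast
        congr 1 with u
        ring
    _ = ∫ t, W t := by
        rw [integral_smul, Measure.integral_comp_inv_smul, finrank_euclideanSpace_fin,
          abs_of_pos (by positivity), smul_smul, inv_mul_cancel₀ (by positivity), one_smul]

theorem integrable_mul_sin_inner {g : ℝ² → ℝ} (hg : Integrable g) (ζ : ℝ²) :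
    Integrable fun u => g u * Real.sin ⟪ζ, u⟫ :=
  hg.mul_bdd (by fun_prop : Continuous _).aestronglyMeasurable
    (ae_of_all _ fun u => by simpa using Real.abs_sin_le_one _)

theorem fourier2_mul_sin_inner {g : ℝ² → ℝ} (hg : Integrable g) (ζ ω : ℝ²) :
    fourier2 (fun u => g u * Real.sin ⟪ζ, u⟫) ω
      = (fourier2 g (ω - ζ) - fourier2 g (ω + ζ)) / (2 * Complex.I) := by
  rw [eq_div_iff (mul_ne_zero two_ne_zero Complex.I_ne_zero), fourier2, fourier2, fourier2,
    ← integral_sub, ← integral_mul_const]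
  congr 1 with u
  simp only [inner_sub_right, inner_add_right, real_inner_comm ζ u]
  push_cast
  set a : ℂ := ((⟪u, ω⟫ : ℝ) : ℂ)
  set b : ℂ := ((⟪ζ, u⟫ : ℝ) : ℂ)
  rw [Complex.sin, show -Complex.I * (a - b) = -Complex.I * a + b * Complex.I by ring,
    show -Complex.I * (a + b) = -Complex.I * a + -b * Complex.I by ring, Complex.exp_add,
    Complex.exp_add]
  linear_combination ((g u : ℂ) * Complex.exp (-Complex.I * a)
    * (Complex.exp (-b * Complex.I) - Complex.exp (b * Complex.I))) * Complex.I_mul_I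
  all_goals exact integrable_fourier2_integrand hg _

noncomputable def wavelet (g : ℝ² → ℝ) (j : ℕ) (ζ : ℝ²) : ℝ² → ℝ :=
  dilate (2 ^ j) fun u => g u * Real.sin ⟪ζ, u⟫

theorem integrable_wavelet {g : ℝ² → ℝ} (hg : Integrable g) (j : ℕ) (ζ : ℝ²) :
    Integrable (wavelet g j ζ) :=
  integrable_dilate (integrable_mul_sin_inner hg ζ) (by positivity)

theorem fourier2_wavelet {G : ℝ → ℝ} {g : ℝ² → ℝ} (hg : Integrable g)
    (hFg : ∀ ω, fourier2 g ω = (G ‖ω‖ : ℂ)) (j : ℕ) (ζ ω : ℝ²) :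
    fourier2 (wavelet g j ζ) ω
      = ((G ‖(2 : ℝ) ^ j • ω - ζ‖ - G ‖(2 : ℝ) ^ j • ω + ζ‖ : ℝ) : ℂ) / (2 * Complex.I) := by
  rw [wavelet, fourier2_dilate _ (by positivity), fourier2_mul_sin_inner hg, hFg, hFg,
    Complex.ofReal_sub]

theorem fourier2_wavelet_eq_zero_of_sum_eq_zero {G : ℝ → ℝ} (hG : AntitoneOn G (Set.Ici 0))
    {g : ℝ² → ℝ} (hg : Integrable g) (hFg : ∀ ω, fourier2 g ω = (G ‖ω‖ : ℂ))
    {s : Finset ℕ} {ζ ω : ℝ²} (h : ∑ j ∈ s, fourier2 (wavelet g j ζ) ω = 0) :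
    ∀ j ∈ s, fourier2 (wavelet g j ζ) ω = 0 := by
  have h2I : (2 * Complex.I) ≠ 0 := mul_ne_zero two_ne_zero Complex.I_ne_zero
  simp only [fourier2_wavelet hg hFg] at h ⊢
  rw [← Finset.sum_div, div_eq_zero_iff, ← Complex.ofReal_sum, Complex.ofReal_eq_zero] at h
  intro j hj
  rw [hG.forall_sub_eq_zero_of_sum_eq_zero (fun j _ => by positivity) (h.resolve_right h2I) j hj,
    Complex.ofReal_zero, zero_div]

theorem second_layer_invertible_general
    (G : ℝ → ℝ) (hmono : AntitoneOn G (Set.Ici 0))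
    (g : EuclideanSpace ℝ (Fin 2) → ℝ) (hg : Integrable g)
    (hFg : ∀ ω : EuclideanSpace ℝ (Fin 2), fourier2 g ω = (G ‖ω‖ : ℂ))
    (Ξ : Finset (EuclideanSpace ℝ (Fin 2))) (J : ℕ)
    (ψ : ℕ → EuclideanSpace ℝ (Fin 2) → EuclideanSpace ℝ (Fin 2) → ℝ)
    (hψ : ∀ j ζ u, ψ j ζ u
      = ((2 : ℝ) ^ (2 * j))⁻¹ * g (((2 : ℝ) ^ j)⁻¹ • u)
          * Real.sin ⟪ζ, ((2 : ℝ) ^ j)⁻¹ • u⟫)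
    (φ hfil : EuclideanSpace ℝ (Fin 2) → ℝ)
    (hφ : Integrable φ) (hh : Integrable hfil)
    (hframe : ∀ ω : EuclideanSpace ℝ (Fin 2),
      0 < ‖fourier2 φ ω‖ ^ 2 + ‖fourier2 hfil ω‖ ^ 2
            + ∑ j ∈ Finset.range J, ∑ ζ ∈ Ξ, ‖fourier2 (ψ j ζ) ω‖ ^ 2)
    (x y : EuclideanSpace ℝ (Fin 2) → ℝ)
    (hx : Integrable x) (hy : Integrable y)
    (v : (EuclideanSpace ℝ (Fin 2) → ℝ) → ℝ → EuclideanSpace ℝ (Fin 2)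
          → EuclideanSpace ℝ (Fin 2) → ℝ)
    (hv : ∀ z γ ζ u, v z γ ζ u
      = ∑ j ∈ Finset.range J, max 0 (γ * conv2 z (ψ j ζ) u))
    (heqφ : ∀ᵐ u : EuclideanSpace ℝ (Fin 2), conv2 x φ u = conv2 y φ u)
    (heqh : ∀ᵐ u : EuclideanSpace ℝ (Fin 2), conv2 x hfil u = conv2 y hfil u)
    (h2φ : ∀ γ ∈ ({-1, 1} : Set ℝ), ∀ ζ ∈ Ξ,
      ∀ᵐ u : EuclideanSpace ℝ (Fin 2),
        conv2 (v x γ ζ) φ u = conv2 (v y γ ζ) φ u)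
    (h2h : ∀ γ ∈ ({-1, 1} : Set ℝ), ∀ ζ ∈ Ξ,
      ∀ᵐ u : EuclideanSpace ℝ (Fin 2),
        conv2 (v x γ ζ) hfil u = conv2 (v y γ ζ) hfil u)
    (h2ψ : ∀ γ ∈ ({-1, 1} : Set ℝ), ∀ ζ ∈ Ξ,
      ∀ γ' ∈ ({-1, 1} : Set ℝ), ∀ ζ' ∈ Ξ, ∀ j' ∈ Finset.range J,
        ∀ᵐ u : EuclideanSpace ℝ (Fin 2),
          max 0 (γ' * conv2 (v x γ ζ) (ψ j' ζ') u)
            = max 0 (γ' * conv2 (v y γ ζ) (ψ j' ζ') u)) :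
    ∀ᵐ u : EuclideanSpace ℝ (Fin 2), x u = y u := by
  obtain rfl : ψ = wavelet g := by
    ext j ζ u
    rw [hψ, wavelet, dilate, ← pow_mul, mul_comm j 2, mul_assoc]
  have hvint : ∀ z, Integrable z → ∀ γ ζ, Integrable (v z γ ζ) := fun z hz γ ζ => by
    rw [funext (hv z γ ζ)]
    exact integrable_sum_max_zero_mul_conv2 _ hz (fun j _ => integrable_wavelet hg j ζ) γ
  have hveq : ∀ γ ∈ ({-1, 1} : Set ℝ), ∀ ζ ∈ Ξ, v x γ ζ =ᵐ[volume] v y γ ζ :=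
    fun γ hγ ζ hζ => ae_eq_of_conv2_ae_eq_of_frame hframe hφ hh
      (fun j _ ζ' _ => integrable_wavelet hg j ζ') (hvint x hx γ ζ) (hvint y hy γ ζ)
      (h2φ γ hγ ζ hζ) (h2h γ hγ ζ hζ) fun j hj ζ' hζ' => .of_max_zero_one_mul
        (h2ψ γ hγ ζ hζ 1 (by simp) ζ' hζ' j hj) (h2ψ γ hγ ζ hζ (-1) (by simp) ζ' hζ' j hj)
  refine ae_eq_of_fourier2_eq hx hy fun ω => eq_of_mul_eq_mul_of_frame (hframe ω)
    (fourier2_mul_eq_of_conv2_ae_eq hx hy hφ heqφ ω)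
    (fourier2_mul_eq_of_conv2_ae_eq hx hy hh heqh ω) fun j hj ζ hζ => ?_
  have hsum := fourier2_mul_sum_eq_of_sum_max_zero_ae_eq hx hy
    (fun j _ => integrable_wavelet hg j ζ)
    ((hveq 1 (by simp) ζ hζ).mono fun u hu => by rwa [hv, hv] at hu)
    ((hveq (-1) (by simp) ζ hζ).mono fun u hu => by rwa [hv, hv] at hu) ω
  by_cases hxy : fourier2 x ω = fourier2 y ω
  · rw [hxy]
  · rw [fourier2_wavelet_eq_zero_of_sum_eq_zero hmono hg hFg
      ((mul_eq_mul_right_iff.1 hsum).resolve_left hxy) j hj, mul_zero, mul_zero]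

/-- Second-layer invertibility: the map `x ↦ {x ∗ φ, x ∗ h, U²x}`, where `U²x`
collects the low-pass, high-pass, and ReLU wavelet coefficients of the summed
first-layer ReLU maps `v^x_{γ,ζ} = Σ_{j<J} σ(γ · x ∗ ψ_{j,ζ})`, is invertible. -/
theorem second_layer_invertible
    (G : ℝ → ℝ) (hmono : AntitoneOn G (Set.Ici 0))
    (hGnonneg : ∀ t ∈ Set.Ici (0 : ℝ), 0 ≤ G t)
    (g : EuclideanSpace ℝ (Fin 2) → ℝ) (hg : Integrable g)
    (hFg : ∀ ω : EuclideanSpace ℝ (Fin 2), fourier2 g ω = (G ‖ω‖ : ℂ))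
    (Ξ : Finset (EuclideanSpace ℝ (Fin 2))) (J : ℕ)
    (ψ : ℕ → EuclideanSpace ℝ (Fin 2) → EuclideanSpace ℝ (Fin 2) → ℝ)
    (hψ : ∀ j ζ u, ψ j ζ u
      = ((2 : ℝ) ^ (2 * j))⁻¹ * g (((2 : ℝ) ^ j)⁻¹ • u)
          * Real.sin ⟪ζ, ((2 : ℝ) ^ j)⁻¹ • u⟫)
    (φ hfil : EuclideanSpace ℝ (Fin 2) → ℝ)
    (hφ : Integrable φ) (hh : Integrable hfil)
    (hframe : ∀ ω : EuclideanSpace ℝ (Fin 2),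
      0 < ‖fourier2 φ ω‖ ^ 2 + ‖fourier2 hfil ω‖ ^ 2
            + ∑ j ∈ Finset.range J, ∑ ζ ∈ Ξ, ‖fourier2 (ψ j ζ) ω‖ ^ 2)
    (x y : EuclideanSpace ℝ (Fin 2) → ℝ)
    (hx : Integrable x) (hy : Integrable y)
    (v : (EuclideanSpace ℝ (Fin 2) → ℝ) → ℝ → EuclideanSpace ℝ (Fin 2)
          → EuclideanSpace ℝ (Fin 2) → ℝ)
    (hv : ∀ z γ ζ u, v z γ ζ u
      = ∑ j ∈ Finset.range J, max 0 (γ * conv2 z (ψ j ζ) u))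
    (heqφ : ∀ᵐ u : EuclideanSpace ℝ (Fin 2), conv2 x φ u = conv2 y φ u)
    (heqh : ∀ᵐ u : EuclideanSpace ℝ (Fin 2), conv2 x hfil u = conv2 y hfil u)
    (h2φ : ∀ γ ∈ ({-1, 1} : Set ℝ), ∀ ζ ∈ Ξ,
      ∀ᵐ u : EuclideanSpace ℝ (Fin 2),
        conv2 (v x γ ζ) φ u = conv2 (v y γ ζ) φ u)
    (h2h : ∀ γ ∈ ({-1, 1} : Set ℝ), ∀ ζ ∈ Ξ,
      ∀ᵐ u : EuclideanSpace ℝ (Fin 2),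
        conv2 (v x γ ζ) hfil u = conv2 (v y γ ζ) hfil u)
    (h2ψ : ∀ γ ∈ ({-1, 1} : Set ℝ), ∀ ζ ∈ Ξ,
      ∀ γ' ∈ ({-1, 1} : Set ℝ), ∀ ζ' ∈ Ξ, ∀ j' ∈ Finset.range J,
        ∀ᵐ u : EuclideanSpace ℝ (Fin 2),
          max 0 (γ' * conv2 (v x γ ζ) (ψ j' ζ') u)
            = max 0 (γ' * conv2 (v y γ ζ) (ψ j' ζ') u)) :
    ∀ᵐ u : EuclideanSpace ℝ (Fin 2), x u = y u :=
  second_layer_invertible_general G hmono g hg hFg Ξ J ψ hψ φ hfil hφ hh hframe x y hx hy v hv heqφ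
    heqh h2φ h2h h2ψ
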